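/- Let σ̃ : ℝ → ℝ be strictly increasing with 0 ≤ σ̃(u) ≤ 1 for all u and satisfying 1 − σ̃(u) = σ̃(−u) for all u ∈ ℝ. For a, b ∈ ℝ define h(a,b) = ∫_ℝ σ̃(aξ + b)·φ(ξ) dξ. Then for every a, b ∈ ℝ: h(a,b) > 1/2 if and only if b > 0, h(a,b) < 1/2 if and only if b < 0, and h(a,b) = 1/2 if and only if b = 0. In particular, the predictor 𝟙{h(a,b) > 1/2} equals 𝟙{b > 0} and does not depend on a. -/

import Mathlib

open MeasureTheory Filter

/-- The standard normal density on `ℝ`. -/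
noncomputable def phi (ξ : ℝ) : ℝ := (Real.sqrt (2 * Real.pi))⁻¹ * Real.exp (-ξ ^ 2 / 2)

lemma phi_pos (ξ : ℝ) : 0 < phi ξ := by
  unfold phi
  positivity

lemma phi_neg (ξ : ℝ) : phi (-ξ) = phi ξ := by
  unfold phi; ring_nf

lemma integrable_phi : Integrable phi := by
  unfold phi
  have : Integrable (fun ξ : ℝ => Real.exp (-(1/2) * ξ ^ 2)) := integrable_exp_neg_mul_sq (by norm_num)
  have h2 : (fun ξ : ℝ => Real.exp (-ξ ^ 2 / 2)) = fun ξ : ℝ => Real.exp (-(1/2) * ξ ^ 2) := by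
    funext ξ; ring_nf
  exact (h2 ▸ this).const_mul _

lemma integral_phi : ∫ ξ : ℝ, phi ξ = 1 := by
  unfold phi
  rw [integral_const_mul]
  have h2 : (fun ξ : ℝ => Real.exp (-ξ ^ 2 / 2)) = fun ξ : ℝ => Real.exp (-(1/2) * ξ ^ 2) := by
    funext ξ; ring_nf
  rw [h2, integral_gaussian]
  rw [show Real.pi / (1/2) = 2 * Real.pi by ring]
  rw [inv_mul_cancel₀]
  positivity

lemma sig_integrable (sig : ℝ → ℝ) (hmono : StrictMono sig)
    (hbdd : ∀ u, 0 ≤ sig u ∧ sig u ≤ 1) (a b : ℝ) :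
    Integrable (fun ξ : ℝ => sig (a * ξ + b) * phi ξ) := by
  have hmeas : Measurable sig := hmono.monotone.measurable
  have hphi : Measurable phi := by
    unfold phi; exact (measurable_const.mul (by measurability))
  apply Integrable.mono integrable_phi
  · exact ((hmeas.comp ((measurable_id.const_mul a).add_const b)).mul hphi).aestronglyMeasurable
  · filter_upwards with ξ
    rw [Real.norm_eq_abs, Real.norm_eq_abs, abs_mul,
      abs_of_nonneg (hbdd _).1, abs_of_nonneg (phi_pos ξ).le]
    exact mul_le_of_le_one_left (phi_pos ξ).le (hbdd _).2

lemma sym_key (sig : ℝ → ℝ) (hmono : StrictMono sig)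
    (hbdd : ∀ u, 0 ≤ sig u ∧ sig u ≤ 1)
    (hsym : ∀ u, 1 - sig u = sig (-u)) (a b : ℝ) :
    (∫ ξ : ℝ, sig (a * ξ + -b) * phi ξ) = 1 - ∫ ξ : ℝ, sig (a * ξ + b) * phi ξ := by
  have h1 : (∫ ξ : ℝ, sig (a * ξ + -b) * phi ξ)
      = ∫ ξ : ℝ, sig (a * (-ξ) + -b) * phi (-ξ) := by
    rw [← integral_neg_eq_self (fun ξ => sig (a * ξ + -b) * phi ξ)]
  have h2 : ∀ ξ : ℝ, sig (a * (-ξ) + -b) * phi (-ξ) = (1 - sig (a * ξ + b)) * phi ξ := by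
    intro ξ
    rw [phi_neg, hsym, show -(a * ξ + b) = a * (-ξ) + -b by ring]
  rw [h1]
  simp_rw [h2, sub_mul, one_mul]
  rw [integral_sub integrable_phi (sig_integrable sig hmono hbdd a b), integral_phi]

lemma half_lt (sig : ℝ → ℝ) (hmono : StrictMono sig)
    (hbdd : ∀ u, 0 ≤ sig u ∧ sig u ≤ 1)
    (hsym : ∀ u, 1 - sig u = sig (-u)) (a b : ℝ) (hb : 0 < b) :
    1 / 2 < ∫ ξ : ℝ, sig (a * ξ + b) * phi ξ := by
  have h0 : (∫ ξ : ℝ, sig (a * ξ + 0) * phi ξ) = 1 / 2 := by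
    have := sym_key sig hmono hbdd hsym a 0
    rw [neg_zero] at this
    linarith
  have hdiff : 0 < ∫ ξ : ℝ, (sig (a * ξ + b) - sig (a * ξ + 0)) * phi ξ := by
    set f := fun ξ : ℝ => (sig (a * ξ + b) - sig (a * ξ + 0)) * phi ξ with hf
    have hfpos : ∀ ξ, 0 < f ξ := fun ξ =>
      mul_pos (sub_pos.2 (hmono (by linarith))) (phi_pos ξ)
    have hint : Integrable f := by
      have := (sig_integrable sig hmono hbdd a b).sub (sig_integrable sig hmono hbdd a 0)
      simpa [hf, sub_mul, Pi.sub_def] using this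
    rw [integral_pos_iff_support_of_nonneg (fun ξ => (hfpos ξ).le) hint]
    have : Function.support f = Set.univ :=
      Set.eq_univ_iff_forall.2 fun ξ => (hfpos ξ).ne'
    rw [this, Real.volume_univ]
    exact ENNReal.zero_lt_top
  have := integral_sub (sig_integrable sig hmono hbdd a b) (sig_integrable sig hmono hbdd a 0)
  simp_rw [sub_mul] at hdiff
  rw [this] at hdiff
  linarith

/-- Prediction to new groups (Proposition 1): for a strictly increasing, symmetric
inverse link `σ̃` with values in `[0,1]` satisfying `1 − σ̃(u) = σ̃(−u)`, the marginal
positive-response probability `h(a,b) = ∫ σ̃(aξ + b) φ(ξ) dξ` satisfies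
`h(a,b) > 1/2 ↔ b > 0`, `h(a,b) < 1/2 ↔ b < 0`, `h(a,b) = 1/2 ↔ b = 0`; in
particular the Bayes classifier `𝟙{h(a,b) > 1/2}` equals `𝟙{b > 0}` and does not
depend on `a`. -/
theorem stmt_14 (sig : ℝ → ℝ) (hmono : StrictMono sig)
    (hbdd : ∀ u, 0 ≤ sig u ∧ sig u ≤ 1)
    (hsym : ∀ u, 1 - sig u = sig (-u))
    (h : ℝ → ℝ → ℝ)
    (hh : ∀ a b, h a b = ∫ ξ : ℝ, sig (a * ξ + b) * phi ξ) :
    ∀ a b : ℝ,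
      (1 / 2 < h a b ↔ 0 < b) ∧
      (h a b < 1 / 2 ↔ b < 0) ∧
      (h a b = 1 / 2 ↔ b = 0) ∧
      ((if 1 / 2 < h a b then (1 : ℝ) else 0) = (if 0 < b then (1 : ℝ) else 0)) := by
  intro a b
  have key : ∀ c : ℝ, 0 < c → 1 / 2 < h a c := fun c hc => by
    rw [hh]; exact half_lt sig hmono hbdd hsym a c hc
  have hzero : h a 0 = 1 / 2 := by
    rw [hh]
    have := sym_key sig hmono hbdd hsym a 0
    rw [neg_zero] at this
    linarith
  have hneg : ∀ c : ℝ, c < 0 → h a c < 1 / 2 := fun c hc => by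
    have h1 : 1 / 2 < h a (-c) := key (-c) (by linarith)
    rw [hh] at h1 ⊢
    have := sym_key sig hmono hbdd hsym a c
    linarith [this]
  have main : (1 / 2 < h a b ↔ 0 < b) := by
    constructor
    · intro hlt
      rcases lt_trichotomy b 0 with hb | hb | hb
      · linarith [hneg b hb]
      · rw [hb] at hlt; linarith
      · exact hb
    · exact key b
  have main2 : (h a b < 1 / 2 ↔ b < 0) := by
    constructor
    · intro hlt
      rcases lt_trichotomy b 0 with hb | hb | hb
      · exact hb
      · rw [hb] at hlt; linarith
      · linarith [key b hb]
    · exact hneg b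
  have main3 : (h a b = 1 / 2 ↔ b = 0) := by
    constructor
    · intro heq
      rcases lt_trichotomy b 0 with hb | hb | hb
      · linarith [hneg b hb]
      · exact hb
      · linarith [key b hb]
    · intro hb; rw [hb]; exact hzero
  refine ⟨main, main2, main3, ?_⟩
  by_cases hc : 0 < b
  · rw [if_pos (main.2 hc), if_pos hc]
  · rw [if_neg (fun hx => hc (main.1 hx)), if_neg hc]
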